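/- If the walk driven by a non-degenerate arrow environment a, started at 0, never hits −1 (T₋₁ = ∞), then for every n ≥ 0 the number W_n of right crossings of the edge {n−1,n} satisfies: W_n equals 1 plus the number of left crossings of {n−1,n} by the walk; equivalently, the total number of crossings of the edge {n−1,n} is 2W_n − 1. -/

import Mathlib

open Filter Set

/-- The number of `true`s (1's) appearing strictly before the `x`-th `false` (0)
in the binary sequence `b`; `Uplus b 0 = 0`. -/
noncomputable def Uplus (b : ℕ → Bool) (x : ℕ) : ℕ :=
  if x = 0 then 0
  else sInf {j : ℕ | ((Finset.range j).filter (fun i => b i = false)).card = x} - x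

/-- The number of `false`s (0's) appearing strictly before the `x`-th `true` (1). -/
noncomputable def Uminus (b : ℕ → Bool) (x : ℕ) : ℕ :=
  Uplus (fun i => !(b i)) x

/-- A binary sequence is non-degenerate if it has infinitely many 0's and
infinitely many 1's. -/
def NonDeg (b : ℕ → Bool) : Prop :=
  {i | b i = false}.Infinite ∧ {i | b i = true}.Infinite

/-- An arrow environment is non-degenerate if every column is non-degenerate. -/
def NonDegEnv (a : ℤ → ℕ → Bool) : Prop := ∀ x : ℤ, NonDeg (a x)

/-- The history (most recent position first) of the walk driven by the arrow
environment `a`, started at `0`: at its `k`-th visit (`k` counted from `0`)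
to site `x` the walk moves right if `a x k = true` and left otherwise. -/
def walkHist (a : ℤ → ℕ → Bool) : ℕ → List ℤ
  | 0 => [0]
  | t + 1 =>
    let h := walkHist a t
    let x := h.headI
    let k := h.countP (fun y => decide (y = x)) - 1
    (x + (if a x k then 1 else -1)) :: h

/-- The position at time `t` of the walk driven by `a`, started at `0`. -/
def walk (a : ℤ → ℕ → Bool) (t : ℕ) : ℤ := (walkHist a t).headI

/-- `Zplus a n y`: the forward process `Z⁺` with initial value `y`. -/
noncomputable def Zplus (a : ℤ → ℕ → Bool) : ℕ → ℕ → ℕ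
  | 0, y => y
  | n + 1, y => Uplus (a (n : ℤ)) (Zplus a n y)

/-- `Zminus a n y`: the backward process `Z⁻` with initial value `y`. -/
noncomputable def Zminus (a : ℤ → ℕ → Bool) : ℕ → ℕ → ℕ
  | 0, y => y
  | n + 1, y => Uminus (a (-(n : ℤ))) (Zminus a n y)

/-- `ZminusBack a l y = U⁻_{a 0} ∘ ⋯ ∘ U⁻_{a (l-1)} (y)`. -/
noncomputable def ZminusBack (a : ℤ → ℕ → Bool) (l y : ℕ) : ℕ :=
  (List.range l).foldr (fun i z => Uminus (a (i : ℤ)) z) y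

/-!
The walk never goes below `0` and moves by `±1`. Each site is visited only finitely often:
if `x` were visited infinitely often, the infinitely many `0` arrows of column `x` would be
used and send the walk to `x - 1` infinitely often, and descending in this way the walk would
reach `-1`. Hence `X_t → ∞`, so for `n ≥ 1` the walk starts below level `n` and ends above it;
its entries into `[n, ∞)` are the right crossings of `{n-1, n}` and its exits are the left
crossings, and a path that starts outside and ends inside enters once more than it exits.
-/

section Crossings

theorem card_entries_add_eq_card_exits_add (p : ℕ → Prop) [DecidablePred p] (m : ℕ) :
    ((Finset.range m).filter fun t => ¬p t ∧ p (t + 1)).card + (if p 0 then 1 else 0) =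
      ((Finset.range m).filter fun t => p t ∧ ¬p (t + 1)).card + (if p m then 1 else 0) := by
  induction m with
  | zero => simp
  | succ m ih =>
    rw [Finset.range_add_one, Finset.filter_insert, Finset.filter_insert]
    by_cases hm : p m <;> by_cases hm' : p (m + 1) <;>
      simp [hm, hm', Finset.card_insert_of_notMem] at ih ⊢ <;> omega

theorem ncard_entries_eq_ncard_exits_add_one (p : ℕ → Prop) (h0 : ¬p 0)
    (hp : ∀ᶠ t in atTop, p t) :
    {t | ¬p t ∧ p (t + 1)}.ncard = {t | p t ∧ ¬p (t + 1)}.ncard + 1 := by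
  classical
  obtain ⟨T, hT⟩ := eventually_atTop.1 hp
  have entries :
      {t | ¬p t ∧ p (t + 1)} = ((Finset.range T).filter fun t => ¬p t ∧ p (t + 1)) := by
    ext t
    simp only [mem_ofPred_eq, Finset.coe_filter, Finset.mem_range, iff_and_self]
    exact fun ⟨ht, _⟩ => not_le.1 fun hle => ht (hT t hle)
  have exits :
      {t | p t ∧ ¬p (t + 1)} = ((Finset.range T).filter fun t => p t ∧ ¬p (t + 1)) := by
    ext t
    simp only [mem_ofPred_eq, Finset.coe_filter, Finset.mem_range, iff_and_self]
    exact fun ⟨_, ht⟩ => not_le.1 fun hle => ht (hT (t + 1) (by omega))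
  have := card_entries_add_eq_card_exits_add p T
  rw [if_neg h0, if_pos (hT T le_rfl)] at this
  rw [entries, exits, ncard_coe_finset, ncard_coe_finset, ← this, add_zero]

theorem ncard_upcrossings_eq_ncard_downcrossings_add_one (X : ℕ → ℤ) (m : ℤ)
    (hX : ∀ t, X (t + 1) = X t + 1 ∨ X (t + 1) = X t - 1) (h0 : X 0 < m)
    (hm : ∀ᶠ t in atTop, m ≤ X t) :
    {t | X t = m - 1 ∧ X (t + 1) = m}.ncard = {t | X t = m ∧ X (t + 1) = m - 1}.ncard + 1 := by
  have up : {t | X t = m - 1 ∧ X (t + 1) = m} = {t | ¬m ≤ X t ∧ m ≤ X (t + 1)} := by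
    ext t; have := hX t; simp only [mem_ofPred_eq]; omega
  have down : {t | X t = m ∧ X (t + 1) = m - 1} = {t | m ≤ X t ∧ ¬m ≤ X (t + 1)} := by
    ext t; have := hX t; simp only [mem_ofPred_eq]; omega
  rw [up, down]
  exact ncard_entries_eq_ncard_exits_add_one (fun t => m ≤ X t) (not_le.2 h0) hm

end Crossings

section ArrowWalk

variable (a : ℤ → ℕ → Bool)

theorem walk_zero : walk a 0 = 0 := rfl

theorem walk_succ (t : ℕ) :
    walk a (t + 1) = walk a t + (if a (walk a t)
      ((walkHist a t).countP (fun y => decide (y = walk a t)) - 1) then 1 else -1) := rfl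

theorem walk_succ_eq_add_one_or_sub_one (t : ℕ) :
    walk a (t + 1) = walk a t + 1 ∨ walk a (t + 1) = walk a t - 1 := by
  rw [walk_succ]
  split <;> simp [sub_eq_add_neg]

theorem countP_walkHist_eq_count (t : ℕ) (x : ℤ) :
    (walkHist a t).countP (fun y => decide (y = x)) =
      Nat.count (fun s => walk a s = x) (t + 1) := by
  induction t with
  | zero => by_cases hx : x = 0 <;> simp [walkHist, Nat.count_succ, walk_zero, hx, eq_comm]
  | succ t ih =>
    change List.countP _ (walk a (t + 1) :: walkHist a t) = _
    rw [List.countP_cons, ih, Nat.count_succ _ (t + 1)]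
    simp

theorem walk_nth_visit_succ {x : ℤ} (hx : {t | walk a t = x}.Infinite) (k : ℕ) :
    walk a (Nat.nth (fun s => walk a s = x) k + 1) = x + if a x k then 1 else -1 := by
  rw [walk_succ, Nat.nth_mem_of_infinite hx k, countP_walkHist_eq_count,
    Nat.count_nth_succ_of_infinite hx k, Nat.add_sub_cancel]

theorem infinite_visits_sub_one {x : ℤ} (ha : {k | a x k = false}.Infinite)
    (hx : {t | walk a t = x}.Infinite) : {t | walk a t = x - 1}.Infinite := by
  have left_steps : (fun k => Nat.nth (fun s => walk a s = x) k + 1) '' {k | a x k = false} ⊆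
      {t | walk a t = x - 1} := by
    rintro _ ⟨k, hk, rfl⟩
    rw [mem_ofPred_eq, walk_nth_visit_succ a hx, show a x k = false from hk]
    rfl
  refine (ha.image fun i _ j _ hij => ?_).mono left_steps
  exact (Nat.nth_strictMono hx).injective (Nat.add_right_cancel hij)

theorem walk_nonneg (h : ∀ t, walk a t ≠ -1) (t : ℕ) : 0 ≤ walk a t := by
  induction t with
  | zero => exact le_rfl
  | succ t ih =>
    have := h (t + 1)
    rcases walk_succ_eq_add_one_or_sub_one a t with hs | hs <;> omega

theorem finite_visits (hnd : NonDegEnv a) (h : ∀ t, walk a t ≠ -1) (x : ℤ) :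
    {t | walk a t = x}.Finite := by
  by_contra hx
  obtain ⟨t, ht⟩ := Set.not_finite.1 hx |>.nonempty
  have hx0 : -1 ≤ x := by have := walk_nonneg a h t; rw [mem_ofPred_eq] at ht; omega
  have : {t | walk a t = -1}.Infinite :=
    Int.leInductionDown (motive := fun y _ => {t | walk a t = y}.Infinite) hx
      (fun y _ hy => infinite_visits_sub_one a (hnd y).1 hy) (-1) hx0
  exact this.nonempty.elim fun t ht => h t ht

theorem tendsto_walk_atTop (hnd : NonDegEnv a) (h : ∀ t, walk a t ≠ -1) :
    Tendsto (walk a) atTop atTop := by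
  refine tendsto_atTop.2 fun N => ?_
  rw [← Nat.cofinite_eq_atTop, eventually_cofinite]
  refine ((finite_Ico 0 N).biUnion fun x _ => finite_visits a hnd h x).subset fun t ht => ?_
  exact mem_biUnion (x := walk a t) ⟨walk_nonneg a h t, not_le.1 ht⟩ rfl

end ArrowWalk

/-- if `T₋₁ = ∞`, then for every `n` the number `W_n` of right
crossings of `{n-1,n}` (with `W₀ = 1`) equals one plus the number of left
crossings of `{n-1,n}`. -/
theorem stmt_8 (a : ℤ → ℕ → Bool) (hnd : NonDegEnv a) (h : ∀ t, walk a t ≠ -1) :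
    ∀ n : ℕ,
      (if n = 0 then 1
        else Set.ncard {t : ℕ | walk a t = (n : ℤ) - 1 ∧ walk a (t + 1) = (n : ℤ)})
      = Set.ncard {t : ℕ | walk a t = (n : ℤ) ∧ walk a (t + 1) = (n : ℤ) - 1} + 1 := by
  intro n
  rcases Nat.eq_zero_or_pos n with rfl | hn
  · have no_left_crossing :
        {t : ℕ | walk a t = ((0 : ℕ) : ℤ) ∧ walk a (t + 1) = ((0 : ℕ) : ℤ) - 1} = ∅ :=
      eq_empty_of_forall_notMem fun t ht => h (t + 1) (by simpa using ht.2)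
    rw [if_pos rfl, no_left_crossing, ncard_empty]
  · rw [if_neg hn.ne']
    exact ncard_upcrossings_eq_ncard_downcrossings_add_one (walk a) n
      (walk_succ_eq_add_one_or_sub_one a) (by rw [walk_zero]; omega)
      (tendsto_atTop.1 (tendsto_walk_atTop a hnd h) n)
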